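/- Let p be a prime with p ≡ 1 (mod 4), t, b positive integers with t² + 4 = b²p, and 𝓛 the associated companion Lucas sequence. Then the period of the sequence 𝓛 modulo p² divides p(p − 1); that is, for all integers m and n with m ≡ n (mod p(p − 1)), one has 𝓛_m ≡ 𝓛_n (mod p²). -/

import Mathlib

/-!
Write `𝓛ₖ = αᵏ + (t - α)ᵏ` with `α² = tα + 1` in the quadratic algebra `(ℤ/p²)[α]`, and put
`κ = 2α - t`, so `κ² = t² + 4 = b²p`. Then `-α² = 1 - κα`, and since `p κ² = 0 = κ⁴` the binomial
expansion collapses to `(-α²)ᵖ = 1 - pκα`. As `(p - 1)/2` is even for `p ≡ 1 mod 4` and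
`(pκα)² = 0`, it follows that `α^(p(p-1)) = 1 - ((p-1)/2) pκα`, and likewise for the
conjugate root `t - α`, whose `κ` is `-κ`. The two correction terms cancel in `𝓛_(p(p-1))` and
`𝓛_(p(p-1)+1)` because `p κ² = 0`, so the sequence shifted by `p(p - 1)` has the initial values
`2, t` modulo `p²` and therefore coincides with `𝓛` modulo `p²`.
-/

theorem one_add_pow_prime_of_mul_sq_eq_zero {A : Type*} [CommRing A] {p : ℕ} (hp : p.Prime)
    {y : A} (hy : (p : A) * y ^ 2 = 0) (hyp : y ^ p = 0) : (1 + y) ^ p = 1 + p * y := by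
  rw [add_comm, add_pow, Finset.sum_eq_add 0 1 zero_ne_one]
  · simp [mul_comm]
  · intro c hc ⟨hc0, hc1⟩
    rcases (Finset.mem_range_succ_iff.mp hc).lt_or_eq with hcp | rfl
    · obtain ⟨d, hd⟩ := hp.dvd_choose_self hc0 hcp
      obtain ⟨j, rfl⟩ : ∃ j, c = j + 2 := ⟨c - 2, by omega⟩
      rw [hd, pow_add]
      push_cast
      linear_combination (y ^ j * 1 ^ (p - (j + 2)) * d) * hy
    · simp [hyp]
  · simp
  · intro h
    exact absurd (Finset.mem_range.mpr (by have := hp.two_le; omega)) h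

theorem one_add_pow_of_sq_eq_zero {A : Type*} [CommRing A] {x : A} (hx : x ^ 2 = 0) (n : ℕ) :
    (1 + x) ^ n = 1 + n * x := by
  induction n with
  | zero => simp
  | succ n ih => rw [pow_succ, ih]; push_cast; linear_combination (n : A) * hx

theorem eq_of_two_sided_recurrence {R : Type*} [Ring R] {c : R} {f g : ℤ → R}
    (hf : ∀ k, f (k + 2) = c * f (k + 1) + f k) (hg : ∀ k, g (k + 2) = c * g (k + 1) + g k)
    (h0 : f 0 = g 0) (h1 : f 1 = g 1) : f = g := by
  suffices ∀ k, f k = g k ∧ f (k + 1) = g (k + 1) from funext fun k => (this k).1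
  intro k
  induction k using Int.induction_on with
  | zero => exact ⟨h0, by simpa using h1⟩
  | succ i ih => exact ⟨ih.2, by rw [add_assoc, one_add_one_eq_two, hf, hg, ih.1, ih.2]⟩
  | pred i ih =>
    refine ⟨?_, by simpa using ih.1⟩
    have hf' := hf (-i - 1)
    have hg' := hg (-i - 1)
    rw [show -(i : ℤ) - 1 + 2 = -i + 1 by ring, show -(i : ℤ) - 1 + 1 = -i by ring] at hf' hg'
    rw [ih.1, ih.2] at hf'
    exact add_left_cancel (hf'.symm.trans hg')

theorem intCast_eq_pow_add_pow {A : Type*} [CommRing A] {t : ℤ} {L : ℤ → ℤ} (hL0 : L 0 = 2)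
    (hL1 : L 1 = t) (hL : ∀ k, L (k + 2) = t * L (k + 1) + L k) {α : A}
    (hα : α ^ 2 = t * α + 1) (n : ℕ) :
    (L n : A) = α ^ n + (t - α) ^ n := by
  suffices ∀ n : ℕ, (L n : A) = α ^ n + (t - α) ^ n ∧
      (L (n + 1) : A) = α ^ (n + 1) + (t - α) ^ (n + 1) from (this n).1
  intro n
  induction n with
  | zero => norm_num [hL0, hL1]
  | succ n ih =>
    refine ⟨mod_cast ih.2, ?_⟩
    rw [show ((n + 1 : ℕ) : ℤ) + 1 = n + 2 by push_cast; ring, hL, Int.cast_add, Int.cast_mul,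
      ih.2, ih.1]
    linear_combination -(α ^ n + (t - α) ^ n) * hα

section

variable {A : Type*} [CommRing A] {p : ℕ} {t α : A}
variable (hα : α ^ 2 = t * α + 1) (hpD : (p : A) * (t ^ 2 + 4) = 0) (hD : (t ^ 2 + 4) ^ 2 = 0)
include hα hpD hD

theorem neg_sq_pow_prime_eq (hp : p.Prime) (h4p : 4 ≤ p) :
    (-α ^ 2) ^ p = 1 - p * ((2 * α - t) * α) := by
  have hκ : (2 * α - t) ^ 2 = t ^ 2 + 4 := by linear_combination 4 * hα
  have hy : (p : A) * (-((2 * α - t) * α)) ^ 2 = 0 := by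
    linear_combination α ^ 2 * hpD + p * α ^ 2 * hκ
  have hy4 : (-((2 * α - t) * α)) ^ 4 = 0 := by
    linear_combination α ^ 4 * ((2 * α - t) ^ 2 + t ^ 2 + 4) * hκ + α ^ 4 * hD
  have hyp : (-((2 * α - t) * α)) ^ p = 0 := by
    rw [← Nat.sub_add_cancel h4p, pow_add, hy4, mul_zero]
  rw [show -α ^ 2 = 1 + -((2 * α - t) * α) by linear_combination hα,
    one_add_pow_prime_of_mul_sq_eq_zero hp hy hyp]
  ring

theorem pow_prime_mul_pred_eq (hp : p.Prime) (hp4 : p % 4 = 1) :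
    α ^ (p * (p - 1)) = 1 - ((p - 1) / 2 : ℕ) * (p * ((2 * α - t) * α)) := by
  have hκ : (2 * α - t) ^ 2 = t ^ 2 + 4 := by linear_combination 4 * hα
  have hx : (-(p * ((2 * α - t) * α))) ^ 2 = 0 := by
    linear_combination p * α ^ 2 * hpD + p ^ 2 * α ^ 2 * hκ
  have hodd : Odd p := hp.odd_of_ne_two (by omega)
  have heven : Even ((p - 1) / 2) := Nat.even_iff.mpr (by omega)
  calc α ^ (p * (p - 1)) = ((-α ^ 2) ^ p) ^ ((p - 1) / 2) := by
        rw [hodd.neg_pow, heven.neg_pow, ← pow_mul, ← pow_mul, mul_left_comm,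
          Nat.mul_div_cancel' (by omega : 2 ∣ p - 1)]
    _ = (1 + -(p * ((2 * α - t) * α))) ^ ((p - 1) / 2) := by
        rw [neg_sq_pow_prime_eq hα hpD hD hp (by have := hp.two_le; omega), sub_eq_add_neg]
    _ = 1 - ((p - 1) / 2 : ℕ) * (p * ((2 * α - t) * α)) := by
        rw [one_add_pow_of_sq_eq_zero hx]; ring

theorem pow_add_pow_sub_prime_mul_pred (hp : p.Prime) (hp4 : p % 4 = 1) :
    α ^ (p * (p - 1)) + (t - α) ^ (p * (p - 1)) = 2 ∧
      α ^ (p * (p - 1) + 1) + (t - α) ^ (p * (p - 1) + 1) = t := by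
  have hβ : (t - α) ^ 2 = t * (t - α) + 1 := by linear_combination hα
  have hpκ : (p : A) * (2 * α - t) ^ 2 = 0 := by
    rw [show (2 * α - t) ^ 2 = t ^ 2 + 4 by linear_combination 4 * hα, hpD]
  rw [pow_succ, pow_succ, pow_prime_mul_pred_eq hα hpD hD hp hp4,
    pow_prime_mul_pred_eq hβ hpD hD hp hp4]
  constructor
  · linear_combination -(((p - 1) / 2 : ℕ) : A) * hpκ
  · linear_combination -(((p - 1) / 2 : ℕ) : A) * t * hpκ

end

open QuadraticAlgebra in
theorem lucas_periodic {R : Type*} [CommRing R] {p : ℕ} (hp : p.Prime) (hp4 : p % 4 = 1)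
    {t : ℤ} {L : ℤ → ℤ} (hL0 : L 0 = 2) (hL1 : L 1 = t)
    (hL : ∀ k, L (k + 2) = t * L (k + 1) + L k)
    (hpD : (p : R) * (t ^ 2 + 4) = 0) (hD : ((t : R) ^ 2 + 4) ^ 2 = 0) :
    Function.Periodic (fun k ↦ (L k : R)) (p * (p - 1) : ℕ) := by
  have hω : (ω : QuadraticAlgebra R 1 t) ^ 2 = (t : QuadraticAlgebra R 1 t) * ω + 1 := by
    ext <;> simp [sq]
  have hpD' : (p : QuadraticAlgebra R 1 t) * (t ^ 2 + 4) = 0 := by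
    simpa [map_ofNat] using congrArg (algebraMap R (QuadraticAlgebra R 1 t)) hpD
  have hD' : ((t : QuadraticAlgebra R 1 t) ^ 2 + 4) ^ 2 = 0 := by
    simpa [map_ofNat] using congrArg (algebraMap R (QuadraticAlgebra R 1 t)) hD
  obtain ⟨hN, hN1⟩ := pow_add_pow_sub_prime_mul_pred hω hpD' hD' hp hp4
  rw [← intCast_eq_pow_add_pow hL0 hL1 hL hω] at hN hN1
  refine congrFun (eq_of_two_sided_recurrence (c := (t : R)) ?_ ?_ ?_ ?_)
  · intro k
    dsimp only
    rw [add_right_comm, hL, add_right_comm, Int.cast_add, Int.cast_mul]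
  · intro k
    rw [hL, Int.cast_add, Int.cast_mul]
  · simpa [hL0, re_ofNat] using congrArg re hN
  · simpa [hL1, add_comm] using congrArg re hN1

theorem stmt_7_general (p : ℕ) (hp : p.Prime) (hp4 : p % 4 = 1)
    (t b : ℤ)
    (hpt : t ^ 2 + 4 = b ^ 2 * (p : ℤ))
    (L : ℤ → ℤ) (hL0 : L 0 = 2) (hL1 : L 1 = t)
    (hL : ∀ k : ℤ, L (k + 2) = t * L (k + 1) + L k) :
    ∀ m n : ℤ, m ≡ n [ZMOD (p : ℤ) * ((p : ℤ) - 1)] →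
      L m ≡ L n [ZMOD (p : ℤ) ^ 2] := by
  have hp2 : (p : ZMod (p ^ 2)) ^ 2 = 0 := by exact_mod_cast ZMod.natCast_self (p ^ 2)
  have hD : (t : ZMod (p ^ 2)) ^ 2 + 4 = b ^ 2 * p := by exact_mod_cast congrArg Int.cast hpt
  have hper := lucas_periodic hp hp4 hL0 hL1 hL (by rw [hD]; linear_combination b ^ 2 * hp2)
    (by rw [hD]; linear_combination b ^ 4 * hp2)
  intro m n hmn
  obtain ⟨q, hq⟩ := hmn.dvd
  have hm : m = n - q * ((p * (p - 1) : ℕ) : ℤ) := by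
    push_cast [Nat.cast_sub hp.one_le]
    linarith
  have hmod := (ZMod.intCast_eq_intCast_iff (L m) (L n) (p ^ 2)).mp (hm ▸ hper.sub_int_mul_eq q)
  exact_mod_cast hmod

theorem stmt_7 (p : ℕ) (hp : p.Prime) (hp4 : p % 4 = 1)
    (t b : ℤ) (ht : 0 < t) (hb : 0 < b)
    (hpt : t ^ 2 + 4 = b ^ 2 * (p : ℤ))
    (L : ℤ → ℤ) (hL0 : L 0 = 2) (hL1 : L 1 = t)
    (hL : ∀ k : ℤ, L (k + 2) = t * L (k + 1) + L k) :
    ∀ m n : ℤ, m ≡ n [ZMOD (p : ℤ) * ((p : ℤ) - 1)] →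
      L m ≡ L n [ZMOD (p : ℤ) ^ 2] :=
  stmt_7_general p hp hp4 t b hpt L hL0 hL1 hL
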